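/- Soundness and completeness of the productivity transformation with respect to the greatest complete Herbrand model: for every logic program P and (possibly infinite) ground atom A, A ∈ M_P^co if and only if there exists a (possibly infinite) proof term π with A⟨π⟩ ∈ M_{P^}^co, assuming M_P^co = T_P ↓ ω and M_{P^}^co = T_{P^} ↓ ω. -/

import Mathlib

/-! Both models are greatest post-fixed points, so both directions are coinduction. Erasing
proof terms maps a post-fixed set of `T_{P^}` to one of `T_P`. Conversely, choosing for every atom
of `M_P^co` a clause that justifies it and unfolding these choices corecursively yields a proof
term for each such atom, and the atoms paired with their proof terms form a post-fixed set of
`T_{P^}`. -/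

structure GroundClause (α : Type*) where
  head : α
  body : List α

def Tp {α : Type*} (P : Set (GroundClause α)) (S : Set α) : Set α :=
  {a | ∃ c ∈ P, c.head = a ∧ ∀ b ∈ c.body, b ∈ S}

/-- The greatest complete Herbrand model `M_P^co`: the greatest (post-)fixed
point of `T_P` on the complete Herbrand base, which exists by Knaster–Tarski. -/
def McoP {α : Type*} (P : Set (GroundClause α)) : Set α :=
  sSup {S | S ⊆ Tp P S}

def PTPF (ι : Type) : PFunctor := ⟨ι × ℕ, fun p => Fin p.2⟩

/-- Possibly infinite ground proof terms, modeled coinductively. -/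
def PTmInf (ι : Type) : Type := (PTPF ι).M

def PTmInf.node {ι : Type} (i : ι) (l : List (PTmInf ι)) : PTmInf ι :=
  PFunctor.M.mk ⟨(i, l.length), fun k => l.get k⟩

def transfInf {α : Type*} {ι : Type} (P : ι → Set (GroundClause α)) :
    Set (GroundClause (α × PTmInf ι)) :=
  {d | ∃ (i : ι) (c : GroundClause α) (πs : List (PTmInf ι)),
        c ∈ P i ∧ πs.length = c.body.length ∧
        d.head = (c.head, PTmInf.node i πs) ∧ d.body = c.body.zip πs}

theorem Tp_mono {α : Type*} (P : Set (GroundClause α)) : Monotone (Tp P) :=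
  fun _ _ hST _ ⟨c, hc, hhead, hbody⟩ => ⟨c, hc, hhead, fun b hb => hST (hbody b hb)⟩

def TpHom {α : Type*} (P : Set (GroundClause α)) : Set α →o Set α :=
  ⟨Tp P, Tp_mono P⟩

theorem subset_McoP {α : Type*} {P : Set (GroundClause α)} {S : Set α} (hS : S ⊆ Tp P S) :
    S ⊆ McoP P :=
  OrderHom.le_gfp (TpHom P) hS

theorem McoP_subset_Tp {α : Type*} (P : Set (GroundClause α)) : McoP P ⊆ Tp P (McoP P) :=
  OrderHom.gfp_le_map (TpHom P) le_rfl

theorem List.exists_mem_zip_of_mem_left {α β : Type*} {l : List α} {l' : List β}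
    (hlen : l'.length = l.length) {a : α} (ha : a ∈ l) : ∃ b, (a, b) ∈ l.zip l' := by
  obtain ⟨k, hk, rfl⟩ := List.getElem_of_mem ha
  have hk' : k < (l.zip l').length := by simp [hlen, hk]
  exact ⟨l'[k], List.getElem_zip (h := hk') ▸ List.getElem_mem hk'⟩

theorem List.zip_ofFn {α β : Type*} (l : List α) (f : Fin l.length → β) :
    l.zip (List.ofFn f) = List.ofFn fun k => (l.get k, f k) := by
  apply List.ext_get <;> simp

theorem PTmInf.node_ofFn {ι : Type} (i : ι) (n : ℕ) (f : Fin n → PTmInf ι) :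
    PTmInf.node i (List.ofFn f) = PFunctor.M.mk ⟨(i, n), f⟩ := by
  have key : ∀ m (h : m = n) (g : Fin m → PTmInf ι), (∀ k, g k = f (k.cast h)) →
      PFunctor.M.mk (F := PTPF ι) ⟨(i, m), g⟩ = PFunctor.M.mk ⟨(i, n), f⟩ := by
    rintro _ rfl g hg
    rw [funext hg]
    rfl
  exact key _ List.length_ofFn _ fun k => List.get_ofFn f k

section TransfInf

variable {α : Type*} {ι : Type} (P : ι → Set (GroundClause α))

theorem fst_image_McoP_transfInf_subset :
    Prod.fst '' McoP (transfInf P) ⊆ McoP (⋃ i, P i) := by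
  refine subset_McoP ?_
  rintro _ ⟨⟨a, π⟩, hπ, rfl⟩
  obtain ⟨d, ⟨i, c, πs, hc, hlen, hhead, hbody⟩, hdhead, hdbody⟩ := McoP_subset_Tp _ hπ
  refine ⟨c, Set.mem_iUnion.mpr ⟨i, hc⟩, congrArg Prod.fst (hhead.symm.trans hdhead), ?_⟩
  intro b hb
  obtain ⟨τ, hbτ⟩ := List.exists_mem_zip_of_mem_left hlen hb
  exact ⟨(b, τ), hdbody _ (hbody ▸ hbτ), rfl⟩

section ProofTerm

variable {S : Set α} (idx : S → ι) (cl : S → GroundClause α)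
  (hbody : ∀ a, ∀ b ∈ (cl a).body, b ∈ S)

noncomputable def proofTermOf : S → PTmInf ι :=
  PFunctor.M.corec fun a =>
    ⟨(idx a, (cl a).body.length), fun k => ⟨(cl a).body.get k, hbody a _ (List.get_mem _ k)⟩⟩

theorem proofTermOf_eq (a : S) :
    proofTermOf idx cl hbody a = PTmInf.node (idx a) (List.ofFn fun k =>
      proofTermOf idx cl hbody ⟨(cl a).body.get k, hbody a _ (List.get_mem _ k)⟩) := by
  rw [PTmInf.node_ofFn]
  exact PFunctor.M.corec_def _ _

theorem range_proofTermOf_subset_Tp (hcl : ∀ a, cl a ∈ P (idx a)) (hhead : ∀ a, (cl a).head = a) :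
    Set.range (fun a => (a.1, proofTermOf idx cl hbody a)) ⊆
      Tp (transfInf P) (Set.range fun a => (a.1, proofTermOf idx cl hbody a)) := by
  rintro _ ⟨a, rfl⟩
  set πs := List.ofFn fun k =>
    proofTermOf idx cl hbody ⟨(cl a).body.get k, hbody a _ (List.get_mem _ k)⟩
  refine ⟨⟨(a.1, proofTermOf idx cl hbody a), (cl a).body.zip πs⟩,
    ⟨idx a, cl a, πs, hcl a, List.length_ofFn, ?_, rfl⟩, rfl, ?_⟩
  · rw [hhead, proofTermOf_eq]
  · intro x hx
    rw [List.zip_ofFn, List.mem_ofFn] at hx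
    obtain ⟨k, rfl⟩ := hx
    exact ⟨⟨_, _⟩, rfl⟩

end ProofTerm

theorem exists_proofTerm_of_subset_Tp {S : Set α} (hS : S ⊆ Tp (⋃ i, P i) S) {a : α}
    (ha : a ∈ S) : ∃ π : PTmInf ι, (a, π) ∈ McoP (transfInf P) := by
  choose cl hcl hhead hbody using fun a : S => hS a.2
  choose idx hidx using fun a => Set.mem_iUnion.mp (hcl a)
  have hpost := range_proofTermOf_subset_Tp P idx cl hbody hidx hhead
  exact ⟨_, subset_McoP hpost ⟨⟨a, ha⟩, rfl⟩⟩

end TransfInf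

theorem transf_greatest_model_iff_general {α : Type*} {ι : Type}
    (P : ι → Set (GroundClause α))
    (A : α) :
    A ∈ McoP (⋃ i, P i) ↔ ∃ π : PTmInf ι, (A, π) ∈ McoP (transfInf P) :=
  ⟨exists_proofTerm_of_subset_Tp P (McoP_subset_Tp _),
    fun ⟨_, hπ⟩ => fst_image_McoP_transfInf_subset P ⟨_, hπ, rfl⟩⟩

/-- soundness and completeness of the productivity transformation
w.r.t. the greatest complete Herbrand model: assuming `M_P^co = T_P ↓ ω` and
`M_{P^}^co = T_{P^} ↓ ω`, a (possibly infinite) ground atom `A` is in `M_P^co`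
iff there is a (possibly infinite) proof term `π` with `A⟨π⟩ ∈ M_{P^}^co`. -/
theorem transf_greatest_model_iff {α : Type*} {ι : Type}
    (P : ι → Set (GroundClause α))
    (h1 : McoP (⋃ i, P i) = ⋂ n : ℕ, (Tp (⋃ i, P i))^[n] Set.univ)
    (h2 : McoP (transfInf P) = ⋂ n : ℕ, (Tp (transfInf P))^[n] Set.univ)
    (A : α) :
    A ∈ McoP (⋃ i, P i) ↔ ∃ π : PTmInf ι, (A, π) ∈ McoP (transfInf P) :=
  transf_greatest_model_iff_general P A
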